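/- Assume V⁺ admits a monomial parametrization with exponent matrix A (data p, A, K, ψ) and that the cone generator matrix E has no zero row. Let k ∈ K and a, b ∈ ℝ_{>0}^n with a ≠ b, (k,a) ∈ V⁺, (k,b) ∈ V⁺ and b − a ∈ im(S). Set z = b − a and μ = ln(b) − ln(a) (logarithm componentwise). Then: (i) z ∈ im(S), μ ∈ rs(A) and sign(z) = sign(μ); and (ii) a_i = z_i/(e^{μ_i} − 1) for every i with z_i ≠ 0, b = a⋆e^μ, and there exists λ ∈ Λ(E) with k_j = (Eλ)_j/φ(a)_j for all j = 1,…,r. -/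

import Mathlib

/-!
Taking logarithms turns the monomial parametrization into an affine one,
`log x = log ψ(k) + Aᵀ log ξ`, so two steady states with the same `k` differ in logarithm
by a vector of `rs(A)`. Since `log` is strictly increasing, `b - a` and `log b - log a` have
the same sign pattern, and `exp μ = b / a` gives `a = z / (exp μ - 1)` wherever `z ≠ 0`.
Finally `k ⋆ φ(a)` is a positive vector of `ker S`, hence of the form `Eλ` with `λ ∈ Λ(E)`.
-/

open Matrix

noncomputable section

/-- The monomial map φ: `phi Y x j = ∏ i, x i ^ Y i j`. -/
def phi {n r : ℕ} (Y : Matrix (Fin n) (Fin r) ℕ) (x : Fin n → ℝ) : Fin r → ℝ :=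
  fun j => ∏ i, x i ^ Y i j

/-- The positive steady state variety V⁺. -/
def Vplus {n r : ℕ} (Y : Matrix (Fin n) (Fin r) ℕ) (S : Matrix (Fin n) (Fin r) ℝ) :
    Set ((Fin r → ℝ) × (Fin n → ℝ)) :=
  {p | (∀ j, 0 < p.1 j) ∧ (∀ i, 0 < p.2 i) ∧
    S.mulVec (fun j => p.1 j * phi Y p.2 j) = 0}

/-- `E` is a cone generator matrix for `S`:
`E` is nonnegative and `ker S ∩ ℝ_{≥0}^r = {Eλ : λ ≥ 0}`. -/
def IsConeGenMatrix {n r d : ℕ} (S : Matrix (Fin n) (Fin r) ℝ)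
    (E : Matrix (Fin r) (Fin d) ℝ) : Prop :=
  (∀ j l, 0 ≤ E j l) ∧
  {v : Fin r → ℝ | S.mulVec v = 0 ∧ ∀ j, 0 ≤ v j} =
    {v : Fin r → ℝ | ∃ lam : Fin d → ℝ, (∀ l, 0 ≤ lam l) ∧ v = E.mulVec lam}

/-- The coefficient cone Λ(E). -/
def Lambda {r d : ℕ} (E : Matrix (Fin r) (Fin d) ℝ) : Set (Fin d → ℝ) :=
  {lam | (∀ l, 0 ≤ lam l) ∧ ∀ j, 0 < E.mulVec lam j}

/-- `ξ^B`: for a rational `q × m` matrix `B`, `(ξ^B) j = ∏ i, ξ i ^ (B i j)` (real powers). -/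
def vecPow {q m : ℕ} (ξ : Fin q → ℝ) (B : Matrix (Fin q) (Fin m) ℚ) : Fin m → ℝ :=
  fun j => ∏ i, ξ i ^ ((B i j : ℝ))

/-- V⁺ admits a monomial parametrization with exponent matrix `A` (data `p`, `A`, `K`, `ψ`). -/
def IsMonomialParamExp {n r : ℕ} (Y : Matrix (Fin n) (Fin r) ℕ)
    (S : Matrix (Fin n) (Fin r) ℝ) (p : ℕ) (A : Matrix (Fin (n - p)) (Fin n) ℚ)
    (K : Set (Fin r → ℝ)) (ψ : (Fin r → ℝ) → (Fin n → ℝ)) : Prop :=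
  p < n ∧ A.rank = n - p ∧ (∀ k ∈ K, ∀ j, 0 < k j) ∧ (∀ k ∈ K, ∀ i, 0 < ψ k i) ∧
  ∀ k x, (∀ j : Fin r, 0 < k j) → (∀ i : Fin n, 0 < x i) →
    ((k, x) ∈ Vplus Y S ↔ k ∈ K ∧
      ∃ ξ : Fin (n - p) → ℝ, (∀ l, 0 < ξ l) ∧ x = fun i => ψ k i * vecPow ξ A i)

/-- `Z` is a conservation matrix for `S` (with `s = rank S`):
its rows form a basis of the left kernel of `S`. -/
def IsConservationMatrix {n r : ℕ} (S : Matrix (Fin n) (Fin r) ℝ) (s : ℕ)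
    (Z : Matrix (Fin (n - s)) (Fin n) ℝ) : Prop :=
  S.rank = s ∧ s < n ∧ LinearIndependent ℝ (fun i => Z i) ∧
    Submodule.span ℝ (Set.range (fun i => Z i)) = LinearMap.ker S.vecMulLinear

/-- `im₊(Z) = {Zx : x ≥ 0}`. -/
def imPos {m n : ℕ} (Z : Matrix (Fin m) (Fin n) ℝ) : Set (Fin m → ℝ) :=
  {c | ∃ x : Fin n → ℝ, (∀ i, 0 ≤ x i) ∧ c = Z.mulVec x}

/-- The real row space of a rational matrix. -/
def rowSpace {q m : ℕ} (A : Matrix (Fin q) (Fin m) ℚ) : Submodule ℝ (Fin m → ℝ) :=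
  Submodule.span ℝ (Set.range (fun l => fun i => ((A l i : ℝ))))

/-- The column space (image) of `S`. -/
def colSpace {n r : ℕ} (S : Matrix (Fin n) (Fin r) ℝ) : Submodule ℝ (Fin n → ℝ) :=
  LinearMap.range S.mulVecLin

/-- Componentwise sign of a vector. -/
def signVec {m : ℕ} (v : Fin m → ℝ) : Fin m → ℝ := fun i => Real.sign (v i)

section VecPow

variable {q m : ℕ} {ξ : Fin q → ℝ}

lemma vecPow_pos (hξ : ∀ l, 0 < ξ l) (B : Matrix (Fin q) (Fin m) ℚ) (j : Fin m) :
    0 < vecPow ξ B j :=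
  Finset.prod_pos fun l _ => Real.rpow_pos_of_pos (hξ l) _

lemma log_vecPow (hξ : ∀ l, 0 < ξ l) (B : Matrix (Fin q) (Fin m) ℚ) (j : Fin m) :
    Real.log (vecPow ξ B j) = ∑ l, (B l j : ℝ) * Real.log (ξ l) := by
  rw [vecPow, Real.log_prod fun l _ => (Real.rpow_pos_of_pos (hξ l) _).ne']
  exact Finset.sum_congr rfl fun l _ => Real.log_rpow (hξ l) _

lemma log_vecPow_mem_rowSpace (hξ : ∀ l, 0 < ξ l) (B : Matrix (Fin q) (Fin m) ℚ) :
    (fun j => Real.log (vecPow ξ B j)) ∈ rowSpace B := by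
  have hsum : (fun j => Real.log (vecPow ξ B j)) =
      ∑ l, Real.log (ξ l) • fun j => (B l j : ℝ) := by
    ext j
    simp only [log_vecPow hξ, Finset.sum_apply, Pi.smul_apply, smul_eq_mul, mul_comm]
  rw [hsum]
  exact Submodule.sum_mem _ fun l _ => Submodule.smul_mem _ _ (Submodule.subset_span ⟨l, rfl⟩)

end VecPow

lemma Real.sign_sub_eq_sign_log_sub_log {x y : ℝ} (hx : 0 < x) (hy : 0 < y) :
    Real.sign (y - x) = Real.sign (Real.log y - Real.log x) := by
  rcases lt_trichotomy x y with h | rfl | h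
  · rw [Real.sign_of_pos (sub_pos.2 h), Real.sign_of_pos (sub_pos.2 (Real.log_lt_log hx h))]
  · simp
  · rw [Real.sign_of_neg (sub_neg.2 h), Real.sign_of_neg (sub_neg.2 (Real.log_lt_log hy h))]

lemma Real.exp_log_sub_log {x y : ℝ} (hx : 0 < x) (hy : 0 < y) :
    Real.exp (Real.log y - Real.log x) = y / x := by
  rw [Real.exp_sub, Real.exp_log hy, Real.exp_log hx]

lemma Real.eq_sub_div_exp_log_sub_log_sub_one {x y : ℝ} (hx : 0 < x) (hy : 0 < y)
    (hxy : y - x ≠ 0) : x = (y - x) / (Real.exp (Real.log y - Real.log x) - 1) := by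
  rw [Real.exp_log_sub_log hx hy, div_sub_one hx.ne', div_div_cancel₀ hxy]

section SteadyStates

variable {n r : ℕ} {Y : Matrix (Fin n) (Fin r) ℕ} {S : Matrix (Fin n) (Fin r) ℝ}
  {k : Fin r → ℝ} {a b : Fin n → ℝ}

lemma phi_pos (ha : ∀ i, 0 < a i) (j : Fin r) : 0 < phi Y a j :=
  Finset.prod_pos fun i _ => pow_pos (ha i) _

lemma IsMonomialParamExp.log_sub_log_mem_rowSpace {p : ℕ}
    {A : Matrix (Fin (n - p)) (Fin n) ℚ} {K : Set (Fin r → ℝ)} {ψ : (Fin r → ℝ) → (Fin n → ℝ)}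
    (hparam : IsMonomialParamExp Y S p A K ψ)
    (hka : (k, a) ∈ Vplus Y S) (hkb : (k, b) ∈ Vplus Y S) :
    (fun i => Real.log (b i) - Real.log (a i)) ∈ rowSpace A := by
  obtain ⟨-, -, -, hψ, hiff⟩ := hparam
  obtain ⟨hK, ξ, hξ, rfl⟩ := (hiff k a hka.1 hka.2.1).mp hka
  obtain ⟨-, η, hη, rfl⟩ := (hiff k b hkb.1 hkb.2.1).mp hkb
  have hlog : (fun i => Real.log (ψ k i * vecPow η A i) - Real.log (ψ k i * vecPow ξ A i)) =
      (fun i => Real.log (vecPow η A i)) - fun i => Real.log (vecPow ξ A i) := by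
    ext i
    rw [Pi.sub_apply, Real.log_mul (hψ k hK i).ne' (vecPow_pos hη A i).ne',
      Real.log_mul (hψ k hK i).ne' (vecPow_pos hξ A i).ne']
    ring
  rw [hlog]
  exact sub_mem (log_vecPow_mem_rowSpace hη A) (log_vecPow_mem_rowSpace hξ A)

lemma IsConeGenMatrix.exists_mem_Lambda_of_mem_Vplus {d : ℕ} {E : Matrix (Fin r) (Fin d) ℝ}
    (hE : IsConeGenMatrix S E) (hka : (k, a) ∈ Vplus Y S) :
    ∃ lam ∈ Lambda E, E *ᵥ lam = fun j => k j * phi Y a j := by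
  have hpos : ∀ j, 0 < k j * phi Y a j := fun j => mul_pos (hka.1 j) (phi_pos hka.2.1 j)
  have hker : (fun j => k j * phi Y a j) ∈
      {v : Fin r → ℝ | S *ᵥ v = 0 ∧ ∀ j, 0 ≤ v j} := ⟨hka.2.2, fun j => (hpos j).le⟩
  rw [hE.2] at hker
  obtain ⟨lam, hlam, hElam⟩ := hker
  exact ⟨lam, ⟨hlam, fun j => hElam ▸ hpos j⟩, hElam.symm⟩

end SteadyStates

theorem sign_pattern_of_multistationarity_general {n r d p : ℕ}
    (Y : Matrix (Fin n) (Fin r) ℕ) (S : Matrix (Fin n) (Fin r) ℝ)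
    (A : Matrix (Fin (n - p)) (Fin n) ℚ) (K : Set (Fin r → ℝ))
    (ψ : (Fin r → ℝ) → (Fin n → ℝ)) (hparam : IsMonomialParamExp Y S p A K ψ)
    (E : Matrix (Fin r) (Fin d) ℝ) (hE : IsConeGenMatrix S E)
    (k : Fin r → ℝ) (a b : Fin n → ℝ)
    (hka : (k, a) ∈ Vplus Y S) (hkb : (k, b) ∈ Vplus Y S)
    (hba : (b - a) ∈ colSpace S)
    (z μ : Fin n → ℝ) (hz : z = b - a)
    (hμ : μ = fun i => Real.log (b i) - Real.log (a i)) :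
    (z ∈ colSpace S ∧ μ ∈ rowSpace A ∧ signVec z = signVec μ) ∧
    ((∀ i, z i ≠ 0 → a i = z i / (Real.exp (μ i) - 1)) ∧
      b = (fun i => a i * Real.exp (μ i)) ∧
      ∃ lam ∈ Lambda E, ∀ j, k j = E.mulVec lam j / phi Y a j) := by
  subst hz hμ
  have ha := hka.2.1
  have hb := hkb.2.1
  obtain ⟨lam, hlam, hElam⟩ := hE.exists_mem_Lambda_of_mem_Vplus hka
  refine ⟨⟨hba, hparam.log_sub_log_mem_rowSpace hka hkb,
      funext fun i => Real.sign_sub_eq_sign_log_sub_log (ha i) (hb i)⟩,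
    fun i hi => Real.eq_sub_div_exp_log_sub_log_sub_one (ha i) (hb i) hi,
    funext fun i => ?_, lam, hlam, fun j => ?_⟩
  · rw [Real.exp_log_sub_log (ha i) (hb i), mul_div_cancel₀ _ (ha i).ne']
  · rw [hElam, mul_div_cancel_right₀ _ (phi_pos ha j).ne']

/-- every pair of distinct positive steady states for the same k arises from
the construction of Theorem (compute_abk): z = b − a and μ = ln b − ln a satisfy the sign
condition and equations (def_a)–(def_k). -/
theorem sign_pattern_of_multistationarity {n r d s p : ℕ} (hn : 1 ≤ n) (hr : 1 ≤ r)
    (Y : Matrix (Fin n) (Fin r) ℕ) (S : Matrix (Fin n) (Fin r) ℝ)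
    (A : Matrix (Fin (n - p)) (Fin n) ℚ) (K : Set (Fin r → ℝ))
    (ψ : (Fin r → ℝ) → (Fin n → ℝ)) (hparam : IsMonomialParamExp Y S p A K ψ)
    (E : Matrix (Fin r) (Fin d) ℝ) (hE : IsConeGenMatrix S E)
    (hrow : ∀ j, ∃ l, E j l ≠ 0)
    (k : Fin r → ℝ) (hk : k ∈ K) (a b : Fin n → ℝ)
    (ha : ∀ i, 0 < a i) (hb : ∀ i, 0 < b i) (hab : a ≠ b)
    (hka : (k, a) ∈ Vplus Y S) (hkb : (k, b) ∈ Vplus Y S)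
    (hba : (b - a) ∈ colSpace S)
    (z μ : Fin n → ℝ) (hz : z = b - a)
    (hμ : μ = fun i => Real.log (b i) - Real.log (a i)) :
    (z ∈ colSpace S ∧ μ ∈ rowSpace A ∧ signVec z = signVec μ) ∧
    ((∀ i, z i ≠ 0 → a i = z i / (Real.exp (μ i) - 1)) ∧
      b = (fun i => a i * Real.exp (μ i)) ∧
      ∃ lam ∈ Lambda E, ∀ j, k j = E.mulVec lam j / phi Y a j) :=
  sign_pattern_of_multistationarity_general Y S A K ψ hparam E hE k a b hka hkb hba z μ hz hμ
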